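/- Let G be a simple graph, let ℓ ≥ 1, and suppose there is an injective map f from the vertices of G to functions Fin ℓ → Fin 3 such that for all vertices u, v: u and v are adjacent in G if and only if f(u)(i) ≠ f(v)(i) for every i (that is, G is isomorphic to an induced subgraph of the ℓ-th direct power of the complete graph K₃). Then there exist a subset S of the functions Fin ℓ → A(K₃), closed under the pointwise multiplication of the graph algebra A(K₃), and a surjective map h from S onto the graph algebra A(G) satisfying h(x·y) = h(x)·h(y) for all x, y ∈ S (that is, the graph algebra of G is a homomorphic image of a subalgebra of a finite direct power of the graph algebra of K₃). -/

import Mathlib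

/-- The multiplication of the graph algebra `A(H)` of a simple graph `H`: the carrier is
`Option α` (the vertices together with `∞ = none`), with `u · v = v` when `u` and `v` are
adjacent and `∞` otherwise, and `∞` absorbing. -/
def gaMul {α : Type} (H : SimpleGraph α) [DecidableRel H.Adj] :
    Option α → Option α → Option α
  | some u, some v => if H.Adj u v then some v else none
  | _, _ => none

/-!
Embed `G` into `A(H)^ι` through `v ↦ (some (f v i))ᵢ` and add the ideal of tuples having some
coordinate `∞`. The product of two embedded vertices is the embedded second vertex when they
are adjacent in `G`, and has a coordinate `∞` otherwise, since then some pair of coordinates is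
non-adjacent in `H`. Hence the embedded vertices together with that ideal form a subalgebra,
and collapsing the ideal to `∞` is a homomorphism onto `A(G)`.
-/

namespace GraphAlgebra

open Function

variable {α V ι : Type} (H : SimpleGraph α) [DecidableRel H.Adj]

@[simp]
theorem gaMul_none_left (b : Option α) : gaMul H none b = none := rfl

@[simp]
theorem gaMul_none_right (a : Option α) : gaMul H a none = none := by
  cases a <;> rfl

@[simp]
theorem gaMul_some_some (u v : α) :
    gaMul H (some u) (some v) = if H.Adj u v then some v else none := rfl

def powMul (x y : ι → Option α) : ι → Option α := fun i => gaMul H (x i) (y i)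

def infIdeal : Set (ι → Option α) := {x | ∃ i, x i = none}

variable {H}

theorem powMul_mem_infIdeal_of_left {x : ι → Option α} (hx : x ∈ infIdeal) (y : ι → Option α) :
    powMul H x y ∈ infIdeal := by
  obtain ⟨i, hi⟩ := hx
  exact ⟨i, by simp [powMul, hi]⟩

theorem powMul_mem_infIdeal_of_right (x : ι → Option α) {y : ι → Option α} (hy : y ∈ infIdeal) :
    powMul H x y ∈ infIdeal := by
  obtain ⟨i, hi⟩ := hy
  exact ⟨i, by simp [powMul, hi]⟩

def liftPow (f : V → ι → α) (v : V) : ι → Option α := fun i => some (f v i)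

theorem liftPow_injective {f : V → ι → α} (hf : Injective f) : Injective (liftPow f) :=
  fun _ _ h => hf (funext fun i => Option.some.inj (congrFun h i))

theorem liftPow_notMem_infIdeal (f : V → ι → α) (v : V) : liftPow f v ∉ infIdeal := by
  rintro ⟨i, hi⟩
  simp [liftPow] at hi

theorem partialInv_liftPow_of_mem_infIdeal (f : V → ι → α) {x : ι → Option α}
    (hx : x ∈ infIdeal) : partialInv (liftPow f) x = none := by
  classical
  refine dif_neg ?_
  rintro ⟨v, rfl⟩
  exact liftPow_notMem_infIdeal f v hx

variable {G : SimpleGraph V} {f : V → ι → α}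

theorem powMul_liftPow_of_adj (hadj : ∀ u v, G.Adj u v ↔ ∀ i, H.Adj (f u i) (f v i))
    {u v : V} (huv : G.Adj u v) : powMul H (liftPow f u) (liftPow f v) = liftPow f v := by
  funext i
  simp [powMul, liftPow, (hadj u v).1 huv i]

theorem powMul_liftPow_mem_infIdeal_of_not_adj
    (hadj : ∀ u v, G.Adj u v ↔ ∀ i, H.Adj (f u i) (f v i)) {u v : V} (huv : ¬G.Adj u v) :
    powMul H (liftPow f u) (liftPow f v) ∈ infIdeal := by
  obtain ⟨i, hi⟩ : ∃ i, ¬H.Adj (f u i) (f v i) := by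
    simpa [hadj u v] using huv
  exact ⟨i, by simp [powMul, liftPow, hi]⟩

variable (f) in
def liftSubalgebra : Set (ι → Option α) := Set.range (liftPow f) ∪ infIdeal

theorem powMul_mem_liftSubalgebra (hadj : ∀ u v, G.Adj u v ↔ ∀ i, H.Adj (f u i) (f v i))
    {x y : ι → Option α} (hx : x ∈ liftSubalgebra f) (hy : y ∈ liftSubalgebra f) :
    powMul H x y ∈ liftSubalgebra f := by
  rcases hx with ⟨u, rfl⟩ | hx
  · rcases hy with ⟨v, rfl⟩ | hy
    · by_cases huv : G.Adj u v
      · exact Or.inl ⟨v, (powMul_liftPow_of_adj hadj huv).symm⟩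
      · exact Or.inr (powMul_liftPow_mem_infIdeal_of_not_adj hadj huv)
    · exact Or.inr (powMul_mem_infIdeal_of_right _ hy)
  · exact Or.inr (powMul_mem_infIdeal_of_left hx _)

variable [DecidableRel G.Adj]

theorem partialInv_liftPow_powMul (hinj : Injective f)
    (hadj : ∀ u v, G.Adj u v ↔ ∀ i, H.Adj (f u i) (f v i))
    {x y : ι → Option α} (hx : x ∈ liftSubalgebra f) (hy : y ∈ liftSubalgebra f) :
    partialInv (liftPow f) (powMul H x y) =
      gaMul G (partialInv (liftPow f) x) (partialInv (liftPow f) y) := by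
  have hleft := partialInv_left (liftPow_injective hinj)
  rcases hx with ⟨u, rfl⟩ | hx
  · rcases hy with ⟨v, rfl⟩ | hy
    · rw [hleft, hleft, gaMul_some_some]
      by_cases huv : G.Adj u v
      · rw [if_pos huv, powMul_liftPow_of_adj hadj huv, hleft]
      · rw [if_neg huv, partialInv_liftPow_of_mem_infIdeal f
          (powMul_liftPow_mem_infIdeal_of_not_adj hadj huv)]
    · rw [partialInv_liftPow_of_mem_infIdeal f hy,
        partialInv_liftPow_of_mem_infIdeal f (powMul_mem_infIdeal_of_right _ hy),
        gaMul_none_right]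
  · rw [partialInv_liftPow_of_mem_infIdeal f hx,
      partialInv_liftPow_of_mem_infIdeal f (powMul_mem_infIdeal_of_left hx _), gaMul_none_left]

theorem exists_subalgebra_pow_surjective_hom [Nonempty ι] (hinj : Injective f)
    (hadj : ∀ u v, G.Adj u v ↔ ∀ i, H.Adj (f u i) (f v i)) :
    ∃ (S : Set (ι → Option α)) (hS : ∀ x ∈ S, ∀ y ∈ S, powMul H x y ∈ S) (h : S → Option V),
      Surjective h ∧ ∀ x y : S, h ⟨powMul H x y, hS x.1 x.2 y.1 y.2⟩ = gaMul G (h x) (h y) := by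
  refine ⟨liftSubalgebra f, fun x hx y hy => powMul_mem_liftSubalgebra hadj hx hy,
    fun x => partialInv (liftPow f) x, ?_, fun x y => partialInv_liftPow_powMul hinj hadj x.2 y.2⟩
  rintro (_ | v)
  · obtain ⟨i⟩ := ‹Nonempty ι›
    have hinf : (fun _ => none : ι → Option α) ∈ infIdeal := ⟨i, rfl⟩
    exact ⟨⟨_, Or.inr hinf⟩, partialInv_liftPow_of_mem_infIdeal f hinf⟩
  · exact ⟨⟨liftPow f v, Or.inl ⟨v, rfl⟩⟩, partialInv_left (liftPow_injective hinj) v⟩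

end GraphAlgebra

open GraphAlgebra in
theorem stmt_18 {V : Type} (G : SimpleGraph V) [DecidableRel G.Adj]
    (ℓ : ℕ) (hℓ : 1 ≤ ℓ) (f : V → Fin ℓ → Fin 3) (hinj : Function.Injective f)
    (hadj : ∀ u v : V, G.Adj u v ↔ ∀ i : Fin ℓ, f u i ≠ f v i) :
    ∃ (S : Set (Fin ℓ → Option (Fin 3)))
      (hS : ∀ x ∈ S, ∀ y ∈ S,
        (fun i => gaMul (⊤ : SimpleGraph (Fin 3)) (x i) (y i)) ∈ S)
      (h : S → Option V),
      Function.Surjective h ∧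
      ∀ x y : S,
        h ⟨fun i => gaMul (⊤ : SimpleGraph (Fin 3)) (x.1 i) (y.1 i),
            hS x.1 x.2 y.1 y.2⟩ = gaMul G (h x) (h y) := by
  have : Nonempty (Fin ℓ) := ⟨⟨0, hℓ⟩⟩
  exact exists_subalgebra_pow_surjective_hom (H := ⊤) hinj
    (by simpa only [SimpleGraph.top_adj] using hadj)
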